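/- arXiv:math/0503435 — 3 statements merged into one kernel-verified Lean document; each statement's English description precedes it below -/
import Mathlib

section
/- Let πₙ(σᵢ) = I₂^{⊗(i−1)} ⊗ R ⊗ I₂^{⊗(n−i−1)} and gᵢ = πₙ(σᵢ)². Then πₙ(σᵢ)⁻¹ g_{i±1} πₙ(σᵢ) = g_{i±1} gᵢ for all valid indices i. -/
open Matrix Complex

/-- The 4×4 matrix `R = (1/√2)·[[1,0,0,1],[0,1,-1,0],[0,1,1,0],[-1,0,0,1]]`. -/
noncomputable def R4 : Matrix (Fin 4) (Fin 4) ℂ :=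
  ((Real.sqrt 2 : ℝ) : ℂ)⁻¹ • !![1, 0, 0, 1; 0, 1, -1, 0; 0, 1, 1, 0; -1, 0, 0, 1]

/-- `R` as a matrix on `ℂ² ⊗ ℂ²`, indexed by pairs; `p.1` is the first tensor
factor (the paper's basis ordering makes the second factor the major index). -/
noncomputable def R : Matrix (Fin 2 × Fin 2) (Fin 2 × Fin 2) ℂ := fun p q =>
  R4 ⟨p.1.val + 2 * p.2.val, by have := p.1.isLt; have := p.2.isLt; omega⟩
     ⟨q.1.val + 2 * q.2.val, by have := q.1.isLt; have := q.2.isLt; omega⟩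

/-- The operator `I₂^{⊗ i} ⊗ M ⊗ I₂^{⊗ (n-i-2)}` acting on `(ℂ²)^{⊗ n}`
(0-indexed: `M` acts on tensor factors `i` and `i+1`). -/
noncomputable def pairOp (n i : ℕ) (M : Matrix (Fin 2 × Fin 2) (Fin 2 × Fin 2) ℂ) :
    Matrix (Fin n → Fin 2) (Fin n → Fin 2) ℂ :=
  if h : i + 1 < n then fun x y =>
    M (x ⟨i, Nat.lt_of_succ_lt h⟩, x ⟨i + 1, h⟩) (y ⟨i, Nat.lt_of_succ_lt h⟩, y ⟨i + 1, h⟩) *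
      ∏ j : Fin n, if (j : ℕ) = i ∨ (j : ℕ) = i + 1 then 1 else if x j = y j then 1 else 0
  else 0

/-- `gMat n i = I₂^{⊗ i} ⊗ R² ⊗ I₂^{⊗ (n-i-2)}` (0-indexed: `gMat n i` is the
paper's `g_{i+1}`, acting on tensor factors `i` and `i+1`). -/
noncomputable def gMat (n i : ℕ) : Matrix (Fin n → Fin 2) (Fin n → Fin 2) ℂ :=
  pairOp n i (R * R)

/-- `piRep n i = I₂^{⊗ i} ⊗ R ⊗ I₂^{⊗ (n-i-2)}` (0-indexed: `piRep n i` is the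
paper's `πₙ(σ_{i+1})`). -/
noncomputable def piRep (n i : ℕ) : Matrix (Fin n → Fin 2) (Fin n → Fin 2) ℂ :=
  pairOp n i R

/-!
Conjugation by `πₙ(σᵢ)` and the products `g_{i±1} gᵢ` involve only three consecutive sites: on
them each operator is `A ⊗ 1` for an 8×8 matrix `A` (after reordering the tensor factors), and
`A ↦ A ⊗ 1` is multiplicative. Moreover `R = (√2)⁻¹ S` for an integer matrix `S` with `Sᵀ S = 2`,
so `R⁻¹ = Rᵀ`. The three-site relation `Rᵀ₁ (R²)₂ R₁ = (R²)₂ (R²)₁` is homogeneous of degree four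
in `R`, so it reduces to the same identity for `S`, an equality of 8×8 integer matrices that is
checked by computation.
-/

open Kronecker

section KroneckerOne

variable {α l m n : Type*} [CommSemiring α] [Fintype l] [DecidableEq l] [Fintype m]
  [DecidableEq m] [Fintype n] [DecidableEq n]

def kroneckerOneHom (e : m ≃ l × n) : Matrix l l α →* Matrix m m α where
  toFun A := (A ⊗ₖ (1 : Matrix n n α)).submatrix e e
  map_one' := by rw [one_kronecker_one, submatrix_one_equiv]
  map_mul' A B := by rw [submatrix_mul_equiv, ← mul_kronecker_mul, one_mul]

lemma kroneckerOneHom_apply (e : m ≃ l × n) (A : Matrix l l α) (x y : m) :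
    kroneckerOneHom e A x y = A (e x).1 (e y).1 * (1 : Matrix n n α) (e x).2 (e y).2 :=
  rfl

lemma kroneckerOneHom_smul (e : m ≃ l × n) (c : α) (A : Matrix l l α) :
    kroneckerOneHom e (c • A) = c • kroneckerOneHom e A := by
  ext x y
  simp only [kroneckerOneHom_apply, Matrix.smul_apply, smul_eq_mul, mul_assoc]

lemma kroneckerOneHom_map {β : Type*} [CommSemiring β] (f : α →+* β) (e : m ≃ l × n)
    (A : Matrix l l α) : kroneckerOneHom e (A.map f) = (kroneckerOneHom e A).map f := by
  ext x y
  simp [kroneckerOneHom_apply, one_apply, apply_ite f]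

end KroneckerOne

section ThreeSites

variable {ι : Type*} [Fintype ι] [DecidableEq ι] {α : Type*} [CommSemiring α]

abbrev onFirstTwo : Matrix (ι × ι) (ι × ι) α →* Matrix (ι × ι × ι) (ι × ι × ι) α :=
  kroneckerOneHom (Equiv.prodAssoc ι ι ι).symm

abbrev onLastTwo : Matrix (ι × ι) (ι × ι) α →* Matrix (ι × ι × ι) (ι × ι × ι) α :=
  kroneckerOneHom (Equiv.prodComm ι (ι × ι))

end ThreeSites

abbrev OutsideThree (n k : ℕ) := {j : Fin n // (j : ℕ) ≠ k ∧ (j : ℕ) ≠ k + 1 ∧ (j : ℕ) ≠ k + 2}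

def threeSitesEquiv {β : Type*} (n k : ℕ) (h : k + 2 < n) :
    (Fin n → β) ≃ (β × β × β) × (OutsideThree n k → β) where
  toFun x := ((x ⟨k, by omega⟩, x ⟨k + 1, by omega⟩, x ⟨k + 2, h⟩), fun j => x j.1)
  invFun p j :=
    if h0 : (j : ℕ) = k then p.1.1
    else if h1 : (j : ℕ) = k + 1 then p.1.2.1
    else if h2 : (j : ℕ) = k + 2 then p.1.2.2
    else p.2 ⟨j, h0, h1, h2⟩
  left_inv x := by
    funext j
    dsimp only
    split_ifs <;> grind
  right_inv p := Prod.ext (by simp) (funext fun j => by simp [j.2])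

lemma pairOp_apply {n i : ℕ} (h : i + 1 < n) (M : Matrix (Fin 2 × Fin 2) (Fin 2 × Fin 2) ℂ)
    (x y : Fin n → Fin 2) :
    pairOp n i M x y = M (x ⟨i, by omega⟩, x ⟨i + 1, h⟩) (y ⟨i, by omega⟩, y ⟨i + 1, h⟩) *
      if ∀ j : Fin n, (j : ℕ) ≠ i → (j : ℕ) ≠ i + 1 → x j = y j then 1 else 0 := by
  have factor (j : Fin n) : (if (j : ℕ) = i ∨ (j : ℕ) = i + 1 then 1 else
      if x j = y j then 1 else 0 : ℂ) =
      if (j : ℕ) ≠ i → (j : ℕ) ≠ i + 1 → x j = y j then 1 else 0 := by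
    split_ifs <;> grind
  rw [show pairOp n i M = _ from dif_pos h]
  simp only [factor, Finset.prod_boole, Finset.mem_univ, true_implies]

lemma pairOp_eq_onFirstTwo {n k : ℕ} (h : k + 2 < n)
    (M : Matrix (Fin 2 × Fin 2) (Fin 2 × Fin 2) ℂ) :
    pairOp n k M = kroneckerOneHom (threeSitesEquiv n k h) (onFirstTwo M) := by
  ext x y
  rw [pairOp_apply (by omega), kroneckerOneHom_apply, kroneckerOneHom_apply]
  simp only [threeSitesEquiv, Equiv.coe_fn_mk, Equiv.prodAssoc_symm_apply, one_apply, funext_iff,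
    Subtype.forall]
  rw [mul_assoc]
  congr 1
  grind

lemma pairOp_succ_eq_onLastTwo {n k : ℕ} (h : k + 2 < n)
    (M : Matrix (Fin 2 × Fin 2) (Fin 2 × Fin 2) ℂ) :
    pairOp n (k + 1) M = kroneckerOneHom (threeSitesEquiv n k h) (onLastTwo M) := by
  ext x y
  rw [pairOp_apply (by omega), kroneckerOneHom_apply, kroneckerOneHom_apply]
  simp only [threeSitesEquiv, Equiv.coe_fn_mk, Equiv.prodComm_apply, Prod.swap, one_apply,
    funext_iff, Subtype.forall]
  rw [mul_assoc]
  congr 1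
  grind

def pairIndex (p : Fin 2 × Fin 2) : Fin 4 := ⟨p.1 + 2 * p.2, by omega⟩

def sqrt2R : Matrix (Fin 2 × Fin 2) (Fin 2 × Fin 2) ℤ :=
  (!![1, 0, 0, 1; 0, 1, -1, 0; 0, 1, 1, 0; -1, 0, 0, 1] : Matrix (Fin 4) (Fin 4) ℤ).submatrix
    pairIndex pairIndex

lemma R_eq_smul_sqrt2R : R = ((√2 : ℝ) : ℂ)⁻¹ • sqrt2R.map (Int.castRingHom ℂ) := by
  ext p q
  fin_cases p <;> fin_cases q <;> simp [R, R4, sqrt2R, pairIndex]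

lemma sqrt2R_transpose_mul_self : sqrt2Rᵀ * sqrt2R = 2 := by decide

lemma sqrt2R_braid_first :
    onFirstTwo sqrt2Rᵀ * onLastTwo (sqrt2R * sqrt2R) * onFirstTwo sqrt2R =
      onLastTwo (sqrt2R * sqrt2R) * onFirstTwo (sqrt2R * sqrt2R) := by
  decide

lemma sqrt2R_braid_last :
    onLastTwo sqrt2Rᵀ * onFirstTwo (sqrt2R * sqrt2R) * onLastTwo sqrt2R =
      onFirstTwo (sqrt2R * sqrt2R) * onLastTwo (sqrt2R * sqrt2R) := by
  decide

lemma R_transpose_mul_self : Rᵀ * R = 1 := by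
  have hc : ((√2 : ℝ) : ℂ)⁻¹ * ((√2 : ℝ) : ℂ)⁻¹ * 2 = 1 := by
    rw [← mul_inv, ← ofReal_mul, Real.mul_self_sqrt zero_le_two]; norm_num
  rw [R_eq_smul_sqrt2R, transpose_smul, smul_mul_smul_comm, ← transpose_map, ← Matrix.map_mul,
    sqrt2R_transpose_mul_self, ← RingHom.mapMatrix_apply, map_ofNat]
  ext p q
  simp [ofNat_apply, one_apply, hc]

lemma kroneckerOneHom_transpose_R_mul_self {m n : Type*} [Fintype m] [DecidableEq m] [Fintype n]
    [DecidableEq n] (e : m ≃ (Fin 2 × Fin 2) × n) :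
    kroneckerOneHom e Rᵀ * kroneckerOneHom e R = 1 := by
  rw [← map_mul, R_transpose_mul_self, map_one]

lemma R_braid_of_sqrt2R_braid {m n : Type*} [Fintype m] [DecidableEq m] [Fintype n]
    [DecidableEq n] (e₁ e₂ : m ≃ (Fin 2 × Fin 2) × n)
    (h : kroneckerOneHom e₁ sqrt2Rᵀ * kroneckerOneHom e₂ (sqrt2R * sqrt2R) *
        kroneckerOneHom e₁ sqrt2R =
      kroneckerOneHom e₂ (sqrt2R * sqrt2R) * kroneckerOneHom e₁ (sqrt2R * sqrt2R)) :
    kroneckerOneHom e₁ Rᵀ * kroneckerOneHom e₂ (R * R) * kroneckerOneHom e₁ R =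
      kroneckerOneHom e₂ (R * R) * kroneckerOneHom e₁ (R * R) := by
  rw [R_eq_smul_sqrt2R]
  simp only [transpose_smul, smul_mul_smul_comm, kroneckerOneHom_smul, ← transpose_map,
    kroneckerOneHom_map, ← Matrix.map_mul, h]
  ring_nf

lemma inv_map_mul_map_mul_map {M m α : Type*} [Monoid M] [Fintype m] [DecidableEq m]
    [CommRing α] (f : M →* Matrix m m α) {a b x y : M} (hba : b * a = 1) (h : b * x * a = y) :
    (f a)⁻¹ * f x * f a = f y := by
  rw [inv_eq_left_inv (by rw [← map_mul, hba, map_one] : f b * f a = 1), ← map_mul, ← map_mul, h]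

/-- `πₙ(σᵢ)⁻¹ g_{i±1} πₙ(σᵢ) = g_{i±1} gᵢ` for all valid adjacent
indices (0-indexed). -/
theorem stmt10 (n i j : ℕ) (hi : i + 2 ≤ n) (hj : j + 2 ≤ n)
    (hadj : j = i + 1 ∨ i = j + 1) :
    (piRep n i)⁻¹ * gMat n j * piRep n i = gMat n j * gMat n i := by
  rcases hadj with rfl | rfl
  · have h : i + 2 < n := by omega
    rw [piRep, gMat, gMat, pairOp_succ_eq_onLastTwo h, pairOp_eq_onFirstTwo h,
      pairOp_eq_onFirstTwo h, ← map_mul]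
    exact inv_map_mul_map_mul_map _ (kroneckerOneHom_transpose_R_mul_self _)
      (R_braid_of_sqrt2R_braid _ _ sqrt2R_braid_first)
  · have h : j + 2 < n := by omega
    rw [piRep, gMat, gMat, pairOp_succ_eq_onLastTwo h, pairOp_eq_onFirstTwo h,
      pairOp_succ_eq_onLastTwo h, ← map_mul]
    exact inv_map_mul_map_mul_map _ (kroneckerOneHom_transpose_R_mul_self _)
      (R_braid_of_sqrt2R_braid _ _ sqrt2R_braid_last)
end

section
/- Every non-central element x of E_m^ν is conjugate to −x, and consequently every nontrivial normal subgroup of E_m^ν intersects the center nontrivially. -/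
/-- Relators for the group `E_m^ν`: generators are `none` (the central element `-1`)
and `some i` (the generator `xᵢ`, 0-indexed); relations are `(-1)² = 1`, `-1` central,
`xᵢ² = ν`, far commutation `xᵢxⱼ = xⱼxᵢ` for `|i-j| ≥ 2`, and adjacent
anticommutation `x_{i+1}xᵢ = (-1)·xᵢx_{i+1}`. -/
def Erel (m : ℕ) (ν : ℤˣ) : Set (FreeGroup (Option (Fin m))) :=
  {FreeGroup.of none ^ 2} ∪
    {r | ∃ i : Fin m, r = FreeGroup.of none * FreeGroup.of (some i) *
        (FreeGroup.of none)⁻¹ * (FreeGroup.of (some i))⁻¹} ∪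
    {r | ∃ i : Fin m, r = FreeGroup.of (some i) ^ 2 *
        (if ν = 1 then 1 else FreeGroup.of none)⁻¹} ∪
    {r | ∃ i j : Fin m, (i : ℕ) + 2 ≤ (j : ℕ) ∧ r = FreeGroup.of (some i) *
        FreeGroup.of (some j) * (FreeGroup.of (some i))⁻¹ * (FreeGroup.of (some j))⁻¹} ∪
    {r | ∃ i j : Fin m, (j : ℕ) = (i : ℕ) + 1 ∧ r = FreeGroup.of (some j) *
        FreeGroup.of (some i) *
        (FreeGroup.of none * FreeGroup.of (some i) * FreeGroup.of (some j))⁻¹}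

/-- The group `E_m^ν`. -/
abbrev Egrp (m : ℕ) (ν : ℤˣ) := PresentedGroup (Erel m ν)

/-- The central element `-1` of `E_m^ν`. -/
def neg1 (m : ℕ) (ν : ℤˣ) : Egrp m ν := PresentedGroup.of none

/-- The generator `x_{i+1}` of `E_m^ν` (0-indexed: `xgen m ν i` is the paper's `x_{i+1}`). -/
def xgen (m : ℕ) (ν : ℤˣ) (i : Fin m) : Egrp m ν := PresentedGroup.of (some i)

/-!
Modulo the central subgroup `⟨-1⟩ = {1, -1}` the generators of `E_m^ν` commute, so the quotient is
abelian and every commutator lies in `{1, -1}`: any two elements commute or anticommute. A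
non-central `x` therefore anticommutes with some `g`, giving `g x g⁻¹ = -x`. If a normal subgroup
contains such an `x`, it contains `(g x g⁻¹) x⁻¹ = -1`; otherwise all its elements are central.
-/

open Subgroup
open scoped commutatorElement

section CommuteUpTo

variable {G : Type*} [Group G]

theorem Subgroup.mem_center_of_closure_eq_top {s : Set G} (hs : closure s = ⊤) {z : G}
    (h : ∀ x ∈ s, x * z = z * x) : z ∈ center G := by
  rwa [← centralizer_univ, ← coe_top, ← hs, centralizer_closure, mem_centralizer_iff]

theorem Subgroup.mul_comm_of_closure_eq_top {s : Set G} (hs : closure s = ⊤)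
    (hcomm : ∀ x ∈ s, ∀ y ∈ s, x * y = y * x) (a b : G) : a * b = b * a :=
  have hsub := closure_le_centralizer_centralizer s
  Set.centralizer_centralizer_comm_of_comm hcomm a (hsub (hs ▸ mem_top a)) b
    (hsub (hs ▸ mem_top b))

theorem Subgroup.commutatorElement_mem_of_closure_eq_top {s : Set G} (hs : closure s = ⊤)
    {K : Subgroup G} [K.Normal] (h : ∀ x ∈ s, ∀ y ∈ s, ⁅x, y⁆ ∈ K) (a b : G) : ⁅a, b⁆ ∈ K := by
  let π := QuotientGroup.mk' K
  have hπ (x y : G) : π x * π y = π y * π x ↔ ⁅x, y⁆ ∈ K := by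
    rw [← commutatorElement_eq_one_iff_mul_comm, ← map_commutatorElement,
      QuotientGroup.mk'_apply, QuotientGroup.eq_one_iff]
  have hgen : closure (π '' s) = ⊤ := by
    rw [← MonoidHom.map_closure, hs, ← MonoidHom.range_eq_map,
      MonoidHom.range_eq_top.mpr (QuotientGroup.mk'_surjective K)]
  refine (hπ a b).mp (mul_comm_of_closure_eq_top hgen ?_ (π a) (π b))
  rintro _ ⟨x, hx, rfl⟩ _ ⟨y, hy, rfl⟩
  exact (hπ x y).mpr (h x hx y hy)

theorem Subgroup.normal_of_le_center {K : Subgroup G} (hK : K ≤ center G) : K.Normal :=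
  ⟨fun n hn g => by rw [mem_center_iff.mp (hK hn) g, mul_inv_cancel_right]; exact hn⟩

theorem mem_zpowers_iff_of_sq_eq_one {z x : G} (hz : z ^ 2 = 1) :
    x ∈ zpowers z ↔ x = 1 ∨ x = z := by
  refine ⟨fun hx => ?_, ?_⟩
  · obtain ⟨k, rfl⟩ := mem_zpowers_iff.mp hx
    rw [zpow_eq_zpow_emod' k hz]
    rcases Int.emod_two_eq_zero_or_one k with h | h <;> simp [h]
  · rintro (rfl | rfl)
    exacts [one_mem _, mem_zpowers _]

theorem mul_comm_or_eq_mul_of_commutatorElement_mem_zpowers {z a b : G} (hz : z ^ 2 = 1)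
    (h : ⁅a, b⁆ ∈ zpowers z) : a * b = b * a ∨ a * b = z * (b * a) := by
  rcases (mem_zpowers_iff_of_sq_eq_one hz).mp h with h | h
  · exact .inl (commutatorElement_eq_one_iff_mul_comm.mp h)
  · rw [commutatorElement_def, mul_inv_eq_iff_eq_mul, mul_inv_eq_iff_eq_mul] at h
    exact .inr (by rw [h, mul_assoc])

theorem isConj_mul_of_notMem_center {z : G} (hG : ∀ a b : G, a * b = b * a ∨ a * b = z * (b * a))
    {x : G} (hx : x ∉ center G) : IsConj x (z * x) := by
  obtain ⟨g, hg⟩ : ∃ g, g * x ≠ x * g := by simpa [mem_center_iff] using hx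
  have hgx : g * x = z * (x * g) := (hG g x).resolve_left hg
  exact isConj_iff.mpr ⟨g, by rw [mul_inv_eq_iff_eq_mul, hgx, mul_assoc]⟩

theorem Subgroup.Normal.exists_mem_center_ne_one {z : G} (hz : z ∈ center G)
    (hG : ∀ a b : G, a * b = b * a ∨ a * b = z * (b * a)) {N : Subgroup G} (hN : N.Normal)
    (hbot : N ≠ ⊥) : ∃ g ∈ N, g ∈ center G ∧ g ≠ 1 := by
  obtain ⟨g, hgN, hg1⟩ := N.bot_or_exists_ne_one.resolve_left hbot
  by_cases hgc : g ∈ center G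
  · exact ⟨g, hgN, hgc, hg1⟩
  obtain ⟨c, hc⟩ := isConj_iff.mp (isConj_mul_of_notMem_center hG hgc)
  refine ⟨z, ?_, hz, ?_⟩
  · rw [← mul_inv_cancel_right z g, ← hc]
    exact mul_mem (hN.conj_mem g hgN c) (inv_mem hgN)
  · rintro rfl
    exact hgc (mem_center_iff.mpr fun a => (hG a g).elim id (by rw [one_mul]; exact id))

end CommuteUpTo

namespace Egrp

variable (m : ℕ) (ν : ℤˣ)

theorem neg1_sq : neg1 m ν ^ 2 = 1 :=
  PresentedGroup.one_of_mem (.inl (.inl (.inl (.inl rfl))))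

theorem commutatorElement_neg1_xgen (i : Fin m) : ⁅neg1 m ν, xgen m ν i⁆ = 1 :=
  (map_commutatorElement ..).symm.trans <|
    PresentedGroup.one_of_mem (rels := Erel m ν) (x := ⁅FreeGroup.of none, FreeGroup.of (some i)⁆)
      (.inl (.inl (.inl (.inr ⟨i, rfl⟩))))

theorem commutatorElement_xgen_of_add_two_le {i j : Fin m} (h : (i : ℕ) + 2 ≤ j) :
    ⁅xgen m ν i, xgen m ν j⁆ = 1 :=
  (map_commutatorElement ..).symm.trans <|
    PresentedGroup.one_of_mem (rels := Erel m ν)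
      (x := ⁅FreeGroup.of (some i), FreeGroup.of (some j)⁆) (.inl (.inr ⟨i, j, h, rfl⟩))

theorem commutatorElement_xgen_succ {i j : Fin m} (h : (j : ℕ) = i + 1) :
    ⁅xgen m ν j, xgen m ν i⁆ = neg1 m ν := by
  have hrel : xgen m ν j * xgen m ν i * (neg1 m ν * xgen m ν i * xgen m ν j)⁻¹ = 1 :=
    PresentedGroup.one_of_mem (.inr ⟨i, j, h, rfl⟩)
  rw [commutatorElement_def, mul_inv_eq_one.mp hrel]
  group

theorem neg1_mem_center : neg1 m ν ∈ center (Egrp m ν) := by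
  refine mem_center_of_closure_eq_top (PresentedGroup.closure_range_of _) ?_
  rintro _ ⟨_ | i, rfl⟩
  · rfl
  · exact (commutatorElement_eq_one_iff_mul_comm.mp (commutatorElement_neg1_xgen m ν i)).symm

theorem commutatorElement_xgen_mem_zpowers_of_le {i j : Fin m} (hij : i ≤ j) :
    ⁅xgen m ν i, xgen m ν j⁆ ∈ zpowers (neg1 m ν) := by
  rcases (Fin.le_iff_val_le_val.mp hij).eq_or_lt with hij | hij
  · rw [Fin.ext hij, commutatorElement_self]
    exact one_mem _
  by_cases hsucc : (j : ℕ) = i + 1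
  · rw [← commutatorElement_inv, commutatorElement_xgen_succ m ν hsucc]
    exact inv_mem (mem_zpowers _)
  · rw [commutatorElement_xgen_of_add_two_le m ν (by omega)]
    exact one_mem _

theorem commutatorElement_of_of_mem_zpowers_neg1 (g h : Option (Fin m)) :
    ⁅(PresentedGroup.of g : Egrp m ν), PresentedGroup.of h⁆ ∈ zpowers (neg1 m ν) := by
  have hneg1 (x : Egrp m ν) : ⁅x, neg1 m ν⁆ = 1 :=
    commutatorElement_eq_one_iff_mul_comm.mpr (mem_center_iff.mp (neg1_mem_center m ν) x)
  rcases g with _ | i <;> rcases h with _ | j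
  · exact (hneg1 _).symm ▸ one_mem _
  · exact (commutatorElement_neg1_xgen m ν j).symm ▸ one_mem _
  · exact (hneg1 _).symm ▸ one_mem _
  · rcases le_total i j with hij | hji
    · exact commutatorElement_xgen_mem_zpowers_of_le m ν hij
    · rw [← commutatorElement_inv]
      exact inv_mem (commutatorElement_xgen_mem_zpowers_of_le m ν hji)

theorem mul_comm_or_eq_neg1_mul (a b : Egrp m ν) :
    a * b = b * a ∨ a * b = neg1 m ν * (b * a) := by
  have : (zpowers (neg1 m ν)).Normal :=
    normal_of_le_center (zpowers_le.mpr (neg1_mem_center m ν))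
  refine mul_comm_or_eq_mul_of_commutatorElement_mem_zpowers (neg1_sq m ν) ?_
  refine commutatorElement_mem_of_closure_eq_top (PresentedGroup.closure_range_of _) ?_ a b
  rintro _ ⟨g, rfl⟩ _ ⟨h, rfl⟩
  exact commutatorElement_of_of_mem_zpowers_neg1 m ν g h

end Egrp

/-- every non-central `x ∈ E_m^ν` is conjugate to `−x`, and every
nontrivial normal subgroup of `E_m^ν` intersects the center nontrivially. -/
theorem stmt14 (m : ℕ) (ν : ℤˣ) :
    (∀ x : Egrp m ν, x ∉ Subgroup.center (Egrp m ν) → IsConj x (neg1 m ν * x)) ∧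
    (∀ N : Subgroup (Egrp m ν), N.Normal → N ≠ ⊥ →
      ∃ g : Egrp m ν, g ∈ N ∧ g ∈ Subgroup.center (Egrp m ν) ∧ g ≠ 1) :=
  ⟨fun _ => isConj_mul_of_notMem_center (Egrp.mul_comm_or_eq_neg1_mul m ν),
    fun _ hN hbot => hN.exists_mem_center_ne_one (Egrp.neg1_mem_center m ν)
      (Egrp.mul_comm_or_eq_neg1_mul m ν) hbot⟩
end

section
/- For m = 2k−1 odd, the center of E_{2k−1}^ν is isomorphic to ℤ/2 × ℤ/2 if ν = 1 or k is even, and isomorphic to ℤ/4 if ν = −1 and k is odd. -/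
/-!
`E_m^ν` is a central extension of `(ℤ/2)^m` by `{±1}`. Concretely it is isomorphic to
`ℤ/2 × (ℤ/2)^m` with product `(s, a) (t, b) = (s + t + β(a, b), a + b)`, where `β` is the bilinear
form with `β(eᵢ, eⱼ) = 1` iff `i = j + 1`, plus `ν` on the diagonal. The map from the presented
group to this model is onto because its image contains `(1, 0)` and every `(∗, eᵢ)`, and it is
injective because the normal form `(-1)^s x₀^{a₀} ⋯ x_{m-1}^{a_{m-1}}` is a left inverse: right
multiplication by a generator moves it past the later generators exactly as in the model.

In the model `(s, a)` is central iff `β(a, ·) = β(·, a)`, i.e. `a_{j+1} = a_{j-1}` for all `j`;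
for `m = 2k - 1` this leaves `a ∈ {0, (1,0,1,…,0,1)}`, so the center has order 4. The square of
`(s, a)` is `(β(a, a), 0)`, and for the alternating vector `β(a, a) = [ν = -1] · k`: the center
has exponent 2 when this vanishes and an element of order 4 otherwise.
-/

lemma ZMod.eq_zero_or_eq_one_of_two (b : ZMod 2) : b = 0 ∨ b = 1 := by
  revert b; decide

lemma pow_val_add_of_mul_self_eq_one {M : Type*} [Monoid M] {g : M} (hg : g * g = 1)
    (a b : ZMod 2) : g ^ (a + b).val = g ^ a.val * g ^ b.val := by
  obtain rfl | rfl := a.eq_zero_or_eq_one_of_two <;>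
    obtain rfl | rfl := b.eq_zero_or_eq_one_of_two <;>
    simp [ZMod.val_one, CharTwo.add_self_eq_zero, hg]

theorem MonoidHom.leftInverse_of_map_mul_of_closure_eq_top {G H : Type*} [Group G] [Group H]
    (φ : G →* H) (ψ : H → G) {S : Set G} (hS : Subgroup.closure S = ⊤) (h1 : ψ 1 = 1)
    (hψ : ∀ p, ∀ x ∈ S, ψ (p * φ x) = ψ p * x) : Function.LeftInverse ψ φ := by
  have key (g : G) : ∀ p, ψ (p * φ g) = ψ p * g := by
    induction (hS ▸ Subgroup.mem_top g : g ∈ Subgroup.closure S) using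
      Subgroup.closure_induction with
    | mem x hx => exact fun p => hψ p x hx
    | one => simp
    | mul x y _ _ hx hy => intro p; rw [map_mul, ← mul_assoc, hy, hx, mul_assoc]
    | inv x _ hx =>
      intro p
      have := hx (p * φ x⁻¹)
      rw [mul_assoc, ← map_mul, inv_mul_cancel, map_one, mul_one] at this
      rw [this, mul_inv_cancel_right]
  intro g
  simpa [h1] using key g 1

lemma AddSubgroup.closure_single_eq_top {ι M : Type*} [Fintype ι] [DecidableEq ι]
    [AddCommGroup M] : AddSubgroup.closure {v : ι → M | ∃ i c, v = Pi.single i c} = ⊤ :=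
  eq_top_iff.mpr fun a _ => Finset.univ_sum_single a ▸
    AddSubgroup.sum_mem _ fun i _ => AddSubgroup.subset_closure ⟨i, a i, rfl⟩

lemma sum_range_ite_mod_two {R : Type*} [AddCommMonoidWithOne R] (m : ℕ) :
    ∑ i ∈ Finset.range m, (if i % 2 = 0 then (1 : R) else 0) = ((m + 1) / 2 : ℕ) := by
  induction m with
  | zero => simp
  | succ m ih =>
    rw [Finset.sum_range_succ, ih]
    split_ifs with h
    · rw [show (m + 1 + 1) / 2 = (m + 1) / 2 + 1 by omega, Nat.cast_succ]
    · rw [show (m + 1 + 1) / 2 = (m + 1) / 2 by omega, add_zero]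

def extendZero {R : Type*} [Zero R] {m : ℕ} (a : Fin m → R) (t : ℕ) : R :=
  if h : t < m then a ⟨t, h⟩ else 0

section extendZero

variable {R : Type*} {m : ℕ}

@[simp]
lemma extendZero_val [Zero R] (a : Fin m → R) (i : Fin m) : extendZero a i = a i := by
  simp [extendZero]

lemma extendZero_of_le [Zero R] (a : Fin m → R) {t : ℕ} (h : m ≤ t) : extendZero a t = 0 :=
  dif_neg (by omega)

lemma extendZero_add [AddZeroClass R] (a b : Fin m → R) :
    extendZero (a + b) = extendZero a + extendZero b := by
  ext t; simp only [extendZero, Pi.add_apply]; split_ifs <;> simp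

lemma extendZero_smul {S : Type*} [Zero R] [SMulZeroClass S R] (c : S) (a : Fin m → R) :
    extendZero (c • a) = c • extendZero a := by
  ext t; simp only [extendZero, Pi.smul_apply]; split_ifs <;> simp

lemma extendZero_single [Zero R] (i : Fin m) (c : R) :
    extendZero (Pi.single i c) = Pi.single (i : ℕ) c := by
  ext t
  unfold extendZero
  split_ifs with h
  · simp [Pi.single_apply, Fin.ext_iff]
  · rw [Pi.single_eq_of_ne (by omega)]

lemma sum_ite_val_eq [AddCommMonoid R] (a : Fin m → R) (t : ℕ) :
    ∑ i : Fin m, (if (i : ℕ) = t then a i else 0) = extendZero a t := by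
  unfold extendZero
  split_ifs with h
  · rw [Finset.sum_eq_single ⟨t, h⟩ (fun i _ hi => if_neg fun h' => hi (Fin.ext h')) (by simp)]
    exact if_pos rfl
  · exact Finset.sum_eq_zero fun i _ => if_neg (by omega)

lemma sum_ite_eq_succ [AddCommMonoid R] (a : Fin m → R) (j : ℕ) :
    ∑ i : Fin m, (if j = (i : ℕ) + 1 then a i else 0)
      = if j = 0 then 0 else extendZero a (j - 1) := by
  split_ifs with hj
  · exact Finset.sum_eq_zero fun i _ => if_neg (by omega)
  · rw [← sum_ite_val_eq]
    exact Finset.sum_congr rfl fun i _ => if_congr (by omega) rfl rfl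

end extendZero

@[ext]
structure BilinExt {R V : Type*} [CommRing R] [AddCommGroup V] [Module R V]
    (β : LinearMap.BilinForm R V) where
  s : R
  v : V

namespace BilinExt

variable {R V : Type*} [CommRing R] [AddCommGroup V] [Module R V] {β : LinearMap.BilinForm R V}

instance : Mul (BilinExt β) := ⟨fun p q => ⟨p.s + q.s + β p.v q.v, p.v + q.v⟩⟩

instance : One (BilinExt β) := ⟨⟨0, 0⟩⟩

instance : Inv (BilinExt β) := ⟨fun p => ⟨-p.s + β p.v p.v, -p.v⟩⟩

lemma mul_def (p q : BilinExt β) : p * q = ⟨p.s + q.s + β p.v q.v, p.v + q.v⟩ := rfl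

lemma one_def : (1 : BilinExt β) = ⟨0, 0⟩ := rfl

lemma inv_def (p : BilinExt β) : p⁻¹ = ⟨-p.s + β p.v p.v, -p.v⟩ := rfl

instance : Group (BilinExt β) where
  mul_assoc p q r := by
    ext
    · simp only [mul_def, map_add, LinearMap.add_apply]
      ring
    · exact add_assoc _ _ _
  one_mul p := by ext <;> simp [mul_def, one_def]
  mul_one p := by ext <;> simp [mul_def, one_def]
  inv_mul_cancel p := by ext <;> simp [mul_def, one_def, inv_def]

lemma mul_self [CharP R 2] (p : BilinExt β) : p * p = ⟨β p.v p.v, 0⟩ := by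
  ext
  · simp [mul_def, CharTwo.add_self_eq_zero]
  · change p.v + p.v = 0
    rw [← two_smul R, CharTwo.two_eq_zero, zero_smul]

lemma mem_center_iff {p : BilinExt β} :
    p ∈ Subgroup.center (BilinExt β) ↔ ∀ w, β p.v w = β w p.v := by
  simp only [Subgroup.mem_center_iff, BilinExt.ext_iff, mul_def, add_comm p.v, and_true]
  refine ⟨fun h w => ?_, fun h q => ?_⟩
  · linear_combination (h ⟨0, w⟩).symm
  · rw [h]; ring

lemma eq_top_of_closure {H : Subgroup (BilinExt β)} {S : Set V}
    (hS : AddSubgroup.closure S = ⊤) (hR : ∀ r : R, (⟨r, 0⟩ : BilinExt β) ∈ H)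
    (hV : ∀ v ∈ S, ∃ r : R, (⟨r, v⟩ : BilinExt β) ∈ H) : H = ⊤ := by
  have hlift (v : V) : ∃ r : R, (⟨r, v⟩ : BilinExt β) ∈ H := by
    induction (hS ▸ AddSubgroup.mem_top v : v ∈ AddSubgroup.closure S) using
      AddSubgroup.closure_induction with
    | mem v hv => exact hV v hv
    | zero => exact ⟨0, H.one_mem⟩
    | add v w _ _ hv hw =>
      obtain ⟨r, hr⟩ := hv
      obtain ⟨r', hr'⟩ := hw
      exact ⟨_, H.mul_mem hr hr'⟩
    | neg v _ hv =>
      obtain ⟨r, hr⟩ := hv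
      exact ⟨_, H.inv_mem hr⟩
  refine eq_top_iff.mpr fun p _ => ?_
  obtain ⟨r, hr⟩ := hlift p.v
  have hp : p = ⟨p.s - r, 0⟩ * ⟨r, p.v⟩ := by ext <;> simp [mul_def]
  exact hp ▸ H.mul_mem (hR _) hr

end BilinExt

def nuExp (ν : ℤˣ) : ZMod 2 := if ν = 1 then 0 else 1

namespace Egrp

variable {m : ℕ} {ν : ℤˣ}

lemma mk_eq_one {r : FreeGroup (Option (Fin m))} (h : r ∈ Erel m ν) :
    PresentedGroup.mk (Erel m ν) r = 1 :=
  (QuotientGroup.eq_one_iff _).mpr (Subgroup.subset_normalClosure h)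

lemma neg1_mul_self : neg1 m ν * neg1 m ν = 1 := by
  have := mk_eq_one (m := m) (ν := ν) (.inl (.inl (.inl (.inl rfl))))
  rwa [map_pow, sq] at this

lemma neg1_mul_xgen (i : Fin m) : neg1 m ν * xgen m ν i = xgen m ν i * neg1 m ν := by
  have := mk_eq_one (ν := ν) (.inl (.inl (.inl (.inr ⟨i, rfl⟩))))
  rwa [map_mul, map_mul, map_mul, map_inv, map_inv, ← commutatorElement_def,
    commutatorElement_eq_one_iff_mul_comm] at this

lemma xgen_mul_self (i : Fin m) : xgen m ν i * xgen m ν i = neg1 m ν ^ (nuExp ν).val := by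
  have := mk_eq_one (ν := ν) (.inl (.inl (.inr ⟨i, rfl⟩)))
  rw [map_mul, map_inv, mul_inv_eq_one, map_pow, sq, apply_ite (PresentedGroup.mk _), map_one]
    at this
  calc xgen m ν i * xgen m ν i = if ν = 1 then 1 else neg1 m ν := this
    _ = neg1 m ν ^ (nuExp ν).val := by rw [nuExp]; split_ifs <;> simp [ZMod.val_one]

lemma xgen_mul_comm {i j : Fin m} (hij : (i : ℕ) + 2 ≤ j) :
    xgen m ν i * xgen m ν j = xgen m ν j * xgen m ν i := by
  have := mk_eq_one (ν := ν) (.inl (.inr ⟨i, j, hij, rfl⟩))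
  rwa [map_mul, map_mul, map_mul, map_inv, map_inv, ← commutatorElement_def,
    commutatorElement_eq_one_iff_mul_comm] at this

lemma xgen_succ_mul {i j : Fin m} (hij : (j : ℕ) = i + 1) :
    xgen m ν j * xgen m ν i = neg1 m ν * xgen m ν i * xgen m ν j := by
  have := mk_eq_one (ν := ν) (.inr ⟨i, j, hij, rfl⟩)
  rwa [map_mul, map_inv, mul_inv_eq_one] at this

lemma neg1_mul_comm (g : Egrp m ν) : neg1 m ν * g = g * neg1 m ν := by
  have : g ∈ Subgroup.centralizer {neg1 m ν} := by
    refine PresentedGroup.generated_by _ _ (fun x => ?_) g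
    rw [Subgroup.mem_centralizer_singleton_iff]
    cases x with
    | none => rfl
    | some i => exact (neg1_mul_xgen i).symm
  exact (Subgroup.mem_centralizer_singleton_iff.mp this).symm

lemma neg1_pow_commute (k : ℕ) (g : Egrp m ν) : Commute (neg1 m ν ^ k) g :=
  Commute.pow_left (neg1_mul_comm g) k

lemma mul_neg1_pow_mul (k : ℕ) (x y : Egrp m ν) :
    x * (neg1 m ν ^ k * y) = neg1 m ν ^ k * (x * y) :=
  ((neg1_pow_commute k x).left_comm y).symm

lemma neg1_pow_add (a b : ZMod 2) :
    neg1 m ν ^ (a + b).val = neg1 m ν ^ a.val * neg1 m ν ^ b.val :=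
  pow_val_add_of_mul_self_eq_one neg1_mul_self a b

end Egrp

def shiftMatrix (m : ℕ) : Matrix (Fin m) (Fin m) (ZMod 2) :=
  Matrix.of fun i j => if (i : ℕ) = j + 1 then 1 else 0

/-- The model of `E_m^ν` sends `-1` to `(1, 0)` and `xᵢ` to `(0, eᵢ)`; the shift part of the
matrix accounts for `x_{i+1} xᵢ = -xᵢ x_{i+1}` and the diagonal part for `xᵢ² = ν`. -/
def eForm (m : ℕ) (ν : ℤˣ) : LinearMap.BilinForm (ZMod 2) (Fin m → ZMod 2) :=
  Matrix.toLinearMap₂' (ZMod 2) (shiftMatrix m + nuExp ν • 1)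

abbrev EModel (m : ℕ) (ν : ℤˣ) := BilinExt (eForm m ν)

namespace EModel

variable {m : ℕ} {ν : ℤˣ}

lemma eForm_single_single (i j : Fin m) :
    eForm m ν (Pi.single i 1) (Pi.single j 1)
      = (if (i : ℕ) = j + 1 then 1 else 0) + if i = j then nuExp ν else 0 := by
  simp [eForm, Matrix.toLinearMap₂'_apply', shiftMatrix, Matrix.one_apply]

lemma eForm_apply_single (a : Fin m → ZMod 2) (j : Fin m) :
    eForm m ν a (Pi.single j 1) = extendZero a (j + 1) + nuExp ν * a j := by
  simp [eForm, Matrix.toLinearMap₂'_apply', shiftMatrix, Matrix.one_apply, dotProduct,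
    ← sum_ite_val_eq]

lemma eForm_single_apply (j : Fin m) (a : Fin m → ZMod 2) :
    eForm m ν (Pi.single j 1) a
      = (if (j : ℕ) = 0 then 0 else extendZero a (j - 1)) + nuExp ν * a j := by
  rw [eForm, Matrix.toLinearMap₂'_apply', single_one_dotProduct, Matrix.add_mulVec,
    Matrix.smul_mulVec, Matrix.one_mulVec, ← sum_ite_eq_succ]
  simp [shiftMatrix, Matrix.mulVec, dotProduct]

def genImage (m : ℕ) (ν : ℤˣ) : Option (Fin m) → EModel m ν
  | none => ⟨1, 0⟩
  | some i => ⟨0, Pi.single i 1⟩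

lemma genImage_rel : ∀ r ∈ Erel m ν, FreeGroup.lift (genImage m ν) r = 1 := by
  rcases Int.units_eq_one_or ν with rfl | rfl <;>
  rintro r ((((rfl | ⟨i, rfl⟩) | ⟨i, rfl⟩) | ⟨i, j, hij, rfl⟩) | ⟨i, j, hij, rfl⟩) <;>
    simp [BilinExt.ext_iff, BilinExt.mul_def, BilinExt.inv_def, BilinExt.one_def, genImage,
      eForm_single_single, sq, nuExp, CharTwo.add_self_eq_zero, CharTwo.neg_eq, Fin.ext_iff,
      ← Pi.single_add]
  all_goals grind

end EModel

namespace Egrp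

variable {m : ℕ} {ν : ℤˣ}

def gen (m : ℕ) (ν : ℤˣ) (t : ℕ) : Egrp m ν := if h : t < m then xgen m ν ⟨t, h⟩ else 1

lemma gen_pow_mul_self (b : ZMod 2) {j : ℕ} (h : j < m) :
    gen m ν j ^ b.val * gen m ν j = neg1 m ν ^ (nuExp ν * b).val * gen m ν j ^ (b + 1).val := by
  obtain rfl | rfl := b.eq_zero_or_eq_one_of_two
  · simp [ZMod.val_one]
  · simp [gen, h, xgen_mul_self, ZMod.val_one, CharTwo.add_self_eq_zero]

lemma gen_succ_pow_mul (b : ZMod 2) {j : ℕ} (h : j + 1 < m) :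
    gen m ν (j + 1) ^ b.val * gen m ν j
      = neg1 m ν ^ b.val * (gen m ν j * gen m ν (j + 1) ^ b.val) := by
  obtain rfl | rfl := b.eq_zero_or_eq_one_of_two
  · simp
  · simp [gen, h, Nat.lt_of_succ_lt h, xgen_succ_mul, mul_assoc, ZMod.val_one]

lemma gen_mul_comm {s t : ℕ} (h : s + 2 ≤ t) :
    gen m ν s * gen m ν t = gen m ν t * gen m ν s := by
  unfold gen
  split_ifs with hs ht ht
  · exact xgen_mul_comm h
  all_goals simp

def word (m : ℕ) (ν : ℤˣ) (f : ℕ → ZMod 2) (s n : ℕ) : Egrp m ν :=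
  ((List.range' s n).map fun t => gen m ν t ^ (f t).val).prod

lemma word_succ (f : ℕ → ZMod 2) (s n : ℕ) :
    word m ν f s (n + 1) = gen m ν s ^ (f s).val * word m ν f (s + 1) n := by
  rw [word, word, List.range'_succ, List.map_cons, List.prod_cons]

lemma word_add (f : ℕ → ZMod 2) (s p q : ℕ) :
    word m ν f s (p + q) = word m ν f s p * word m ν f (s + p) q := by
  rw [word, word, word, ← List.range'_append, List.map_append, List.prod_append, one_mul]

lemma word_congr {f g : ℕ → ZMod 2} {s n : ℕ} (h : ∀ t, s ≤ t → t < s + n → f t = g t) :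
    word m ν f s n = word m ν g s n := by
  unfold word
  congr 1
  refine List.map_congr_left fun t ht => ?_
  rw [List.mem_range'_1] at ht
  rw [h t ht.1 ht.2]

lemma word_mul_gen_comm (f : ℕ → ZMod 2) {j s : ℕ} (n : ℕ) (h : j + 2 ≤ s) :
    word m ν f s n * gen m ν j = gen m ν j * word m ν f s n := by
  induction n generalizing s with
  | zero => simp [word]
  | succ n ih =>
    rw [word_succ, mul_assoc, ih (by omega), ← mul_assoc, ← mul_assoc,
      ((show Commute (gen m ν s) (gen m ν j) from (gen_mul_comm h).symm).pow_left _).eq]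

lemma word_mul_gen_of_add_eq (f : ℕ → ZMod 2) (hf : ∀ t, m ≤ t → f t = 0) {j n : ℕ}
    (h : j + 1 + n = m) :
    word m ν f (j + 1) n * gen m ν j
      = neg1 m ν ^ (f (j + 1)).val * (gen m ν j * word m ν f (j + 1) n) := by
  cases n with
  | zero => simp [word, hf (j + 1) (by omega)]
  | succ n =>
    rw [word_succ, mul_assoc, word_mul_gen_comm f n (by omega), ← mul_assoc,
      gen_succ_pow_mul _ (by omega)]
    simp only [mul_assoc]

lemma word_mul_gen (f : ℕ → ZMod 2) (hf : ∀ t, m ≤ t → f t = 0) {j : ℕ} (hj : j < m) :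
    word m ν f 0 m * gen m ν j
      = neg1 m ν ^ (f (j + 1) + nuExp ν * f j).val * word m ν (f + Pi.single j 1) 0 m := by
  obtain ⟨n, hn⟩ : ∃ n, j + 1 + n = m := ⟨m - j - 1, by omega⟩
  have split (g : ℕ → ZMod 2) :
      word m ν g 0 m = word m ν g 0 j * (gen m ν j ^ (g j).val * word m ν g (j + 1) n) := by
    rw [congrArg (word m ν g 0) (show m = j + (n + 1) by omega), word_add, zero_add, word_succ]
  have hlow : word m ν (f + Pi.single j 1) 0 j = word m ν f 0 j :=
    word_congr fun t _ ht => by simp [Pi.single_eq_of_ne (show t ≠ j by omega)]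
  have hhigh : word m ν (f + Pi.single j 1) (j + 1) n = word m ν f (j + 1) n :=
    word_congr fun t ht _ => by simp [Pi.single_eq_of_ne (show t ≠ j by omega)]
  rw [split, split, hlow, hhigh, Pi.add_apply, Pi.single_eq_same, neg1_pow_add]
  calc word m ν f 0 j * (gen m ν j ^ (f j).val * word m ν f (j + 1) n) * gen m ν j
      = word m ν f 0 j * (gen m ν j ^ (f j).val * (word m ν f (j + 1) n * gen m ν j)) := by
        simp only [mul_assoc]
    _ = neg1 m ν ^ (f (j + 1)).val * (word m ν f 0 j * ((gen m ν j ^ (f j).val * gen m ν j)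
          * word m ν f (j + 1) n)) := by
        rw [word_mul_gen_of_add_eq f hf hn, mul_neg1_pow_mul, mul_neg1_pow_mul]
        simp only [mul_assoc]
    _ = neg1 m ν ^ (f (j + 1)).val * neg1 m ν ^ (nuExp ν * f j).val
          * (word m ν f 0 j * (gen m ν j ^ (f j + 1).val * word m ν f (j + 1) n)) := by
        rw [gen_pow_mul_self _ (by omega)]
        simp only [mul_assoc]
        rw [mul_neg1_pow_mul]

def toModel (m : ℕ) (ν : ℤˣ) : Egrp m ν →* EModel m ν :=
  PresentedGroup.toGroup EModel.genImage_rel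

lemma toModel_of (x : Option (Fin m)) :
    toModel m ν (PresentedGroup.of x) = EModel.genImage m ν x :=
  PresentedGroup.toGroup.of EModel.genImage_rel

lemma toModel_surjective : Function.Surjective (toModel m ν) := by
  refine MonoidHom.range_eq_top.mp (BilinExt.eq_top_of_closure AddSubgroup.closure_single_eq_top
    (fun r => ?_) ?_)
  · obtain rfl | rfl := r.eq_zero_or_eq_one_of_two
    · exact (toModel m ν).range.one_mem
    · exact ⟨neg1 m ν, toModel_of none⟩
  · rintro _ ⟨i, c, rfl⟩
    obtain rfl | rfl := c.eq_zero_or_eq_one_of_two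
    · exact ⟨0, 1, by rw [map_one, Pi.single_zero]; rfl⟩
    · exact ⟨0, xgen m ν i, toModel_of (some i)⟩

def normalForm (p : EModel m ν) : Egrp m ν :=
  neg1 m ν ^ p.s.val * word m ν (extendZero p.v) 0 m

lemma normalForm_mul_genImage (p : EModel m ν) (x : Option (Fin m)) :
    normalForm (p * EModel.genImage m ν x) = normalForm p * PresentedGroup.of x := by
  cases x with
  | none =>
    simp only [normalForm, EModel.genImage, BilinExt.mul_def, map_zero, add_zero,
      neg1_pow_add, ZMod.val_one, pow_one, mul_assoc]
    rw [neg1_mul_comm]; rfl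
  | some j =>
    have hj : PresentedGroup.of (some j) = gen m ν j := by simp [gen, xgen]
    simp only [normalForm, EModel.genImage, BilinExt.mul_def, add_zero, EModel.eForm_apply_single,
      extendZero_add, extendZero_single, hj, mul_assoc,
      word_mul_gen _ (fun t => extendZero_of_le p.v) j.isLt, extendZero_val,
      neg1_pow_add]

lemma toModel_injective : Function.Injective (toModel m ν) := by
  refine (MonoidHom.leftInverse_of_map_mul_of_closure_eq_top (toModel m ν) normalForm
    (PresentedGroup.closure_range_of _) ?_ ?_).injective
  · simp [normalForm, BilinExt.one_def, word, extendZero]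
  · rintro p _ ⟨x, rfl⟩
    rw [toModel_of, normalForm_mul_genImage]

noncomputable def equivModel (m : ℕ) (ν : ℤˣ) : Egrp m ν ≃* EModel m ν :=
  MulEquiv.ofBijective (toModel m ν) ⟨toModel_injective, toModel_surjective⟩

end Egrp

namespace EModel

variable {m : ℕ} {ν : ℤˣ}

def alternating (m : ℕ) : Fin m → ZMod 2 := fun i => if (i : ℕ) % 2 = 0 then 1 else 0

lemma extendZero_alternating (t : ℕ) :
    extendZero (alternating m) t = if t % 2 = 0 ∧ t < m then 1 else 0 := by
  unfold extendZero alternating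
  by_cases h : t < m <;> simp [h]

lemma forall_eForm_comm_iff (a : Fin m → ZMod 2) :
    (∀ w, eForm m ν a w = eForm m ν w a)
      ↔ ∀ j : Fin m, extendZero a (j + 1) = if (j : ℕ) = 0 then 0 else extendZero a (j - 1) := by
  have hj (j : Fin m) : eForm m ν a (Pi.single j 1) = eForm m ν (Pi.single j 1) a
      ↔ extendZero a (j + 1) = if (j : ℕ) = 0 then 0 else extendZero a (j - 1) := by
    rw [eForm_apply_single, eForm_single_apply, add_left_inj]
  refine ⟨fun h j => (hj j).mp (h _), fun h => ?_⟩
  have : eForm m ν a = (eForm m ν).flip a :=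
    (Pi.basisFun (ZMod 2) (Fin m)).ext fun j => by simpa using (hj j).mpr (h j)
  exact fun w => LinearMap.congr_fun this w

lemma extendZero_eq_of_forall (hm : Odd m) {a : Fin m → ZMod 2}
    (h : ∀ j : Fin m, extendZero a (j + 1) = if (j : ℕ) = 0 then 0 else extendZero a (j - 1))
    (t : ℕ) : extendZero a t = if t % 2 = 0 ∧ t < m then extendZero a 0 else 0 := by
  obtain ⟨l, rfl⟩ := hm
  induction t using Nat.twoStepInduction with
  | zero => simp
  | one => simpa using h ⟨0, by omega⟩
  | more t ih _ =>
    by_cases ht : t + 2 < 2 * l + 1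
    · have := h ⟨t + 1, by omega⟩
      simp only [add_assoc, Nat.reduceAdd, add_eq_zero, one_ne_zero, and_false, if_false,
        Nat.add_sub_cancel] at this
      rw [this, ih]
      exact if_congr (by omega) rfl rfl
    · rw [extendZero_of_le _ (by omega), if_neg (by omega)]

lemma forall_eForm_comm_iff_of_odd (hm : Odd m) (a : Fin m → ZMod 2) :
    (∀ w, eForm m ν a w = eForm m ν w a) ↔ ∃ c : ZMod 2, a = c • alternating m := by
  rw [forall_eForm_comm_iff]
  constructor
  · intro h
    refine ⟨extendZero a 0, funext fun i => ?_⟩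
    rw [← extendZero_val a i, extendZero_eq_of_forall hm h, Pi.smul_apply,
      ← extendZero_val (alternating _) i, extendZero_alternating]
    split_ifs <;> simp
  · rintro ⟨c, rfl⟩ j
    obtain ⟨l, rfl⟩ := hm
    simp only [extendZero_smul, Pi.smul_apply, extendZero_alternating]
    split_ifs <;> first | omega | simp

lemma eForm_alternating :
    eForm m ν (alternating m) (alternating m) = nuExp ν * ((m + 1) / 2 : ℕ) := by
  have hsum (v a : Fin m → ZMod 2) : eForm m ν v a = ∑ j, v j * eForm m ν (Pi.single j 1) a := by
    simp only [eForm, Matrix.toLinearMap₂'_apply', single_one_dotProduct]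
    rfl
  have hterm (j : Fin m) : alternating m j * eForm m ν (Pi.single j 1) (alternating m)
      = nuExp ν * if (j : ℕ) % 2 = 0 then 1 else 0 := by
    rw [eForm_single_apply, ← extendZero_val (alternating m) j, extendZero_alternating,
      extendZero_alternating]
    split_ifs <;> first | omega | simp
  rw [hsum, Finset.sum_congr rfl fun j _ => hterm j, ← Finset.mul_sum,
    Fin.sum_univ_eq_sum_range (fun i => if i % 2 = 0 then (1 : ZMod 2) else 0),
    sum_range_ite_mod_two]

lemma mem_center_iff_of_odd (hm : Odd m) {p : EModel m ν} :
    p ∈ Subgroup.center (EModel m ν) ↔ ∃ c : ZMod 2, p.v = c • alternating m := by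
  rw [BilinExt.mem_center_iff, forall_eForm_comm_iff_of_odd hm]

lemma card_center (hm : Odd m) : Nat.card (Subgroup.center (EModel m ν)) = 4 := by
  have h0 : 0 < m := hm.pos
  let f : ZMod 2 × ZMod 2 → Subgroup.center (EModel m ν) :=
    fun x => ⟨⟨x.1, x.2 • alternating m⟩, (mem_center_iff_of_odd hm).mpr ⟨x.2, rfl⟩⟩
  have hf : Function.Bijective f := by
    refine ⟨fun x y hxy => ?_, fun z => ?_⟩
    · have h := congrArg Subtype.val hxy
      simp only [f, BilinExt.mk.injEq] at h
      have := congrFun h.2 ⟨0, h0⟩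
      simp [alternating] at this
      exact Prod.ext h.1 this
    · obtain ⟨c, hc⟩ := (mem_center_iff_of_odd hm).mp z.2
      exact ⟨(z.1.s, c), Subtype.ext (BilinExt.ext rfl hc.symm)⟩
  rw [← Nat.card_congr (Equiv.ofBijective f hf)]
  simp

lemma isKleinFour_center (hm : Odd m) (h : eForm m ν (alternating m) (alternating m) = 0) :
    IsKleinFour (Subgroup.center (EModel m ν)) where
  card_four := card_center hm
  exponent_two := by
    have : Finite (Subgroup.center (EModel m ν)) :=
      Nat.finite_of_card_ne_zero (by rw [card_center hm]; norm_num)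
    have : Nontrivial (Subgroup.center (EModel m ν)) :=
      Finite.one_lt_card_iff_nontrivial.mp (by rw [card_center hm]; norm_num)
    refine (Monoid.exponent_eq_prime_iff Nat.prime_two).mpr fun z hz => orderOf_eq_prime ?_ hz
    obtain ⟨c, hc⟩ := (mem_center_iff_of_odd hm).mp z.2
    ext : 1
    simp [sq, BilinExt.mul_self, hc, h, BilinExt.one_def]

lemma isCyclic_center (hm : Odd m) (h : eForm m ν (alternating m) (alternating m) = 1) :
    IsCyclic (Subgroup.center (EModel m ν)) := by
  have : Finite (Subgroup.center (EModel m ν)) :=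
    Nat.finite_of_card_ne_zero (by rw [card_center hm]; norm_num)
  let z : Subgroup.center (EModel m ν) :=
    ⟨⟨0, alternating m⟩, (mem_center_iff_of_odd hm).mpr ⟨1, (one_smul _ _).symm⟩⟩
  have hz : (z ^ 2 : EModel m ν) = ⟨1, 0⟩ := by
    simp [z, sq, BilinExt.mul_self, h]
  refine isCyclic_of_orderOf_eq_card z ?_
  rw [card_center hm, show 4 = 2 ^ (1 + 1) from rfl]
  refine orderOf_eq_prime_pow (fun h1 => ?_) ?_
  · have := congrArg (fun w : Subgroup.center (EModel m ν) => (w : EModel m ν).s) h1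
    simp [hz, BilinExt.one_def] at this
  · rw [show 2 ^ (1 + 1) = 2 * 2 from rfl, pow_mul]
    ext : 1
    simp [sq, BilinExt.mul_self, BilinExt.one_def]

end EModel

/-- for `m = 2k−1` odd, `Z(E_{2k−1}^ν) ≅ ℤ/2 × ℤ/2` if `ν = 1` or
`k` is even, and `Z(E_{2k−1}^ν) ≅ ℤ/4` if `ν = −1` and `k` is odd. -/
theorem stmt15 (k : ℕ) (hk : 1 ≤ k) (ν : ℤˣ) :
    ((ν = 1 ∨ Even k) →
      Nonempty (Subgroup.center (Egrp (2 * k - 1) ν) ≃*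
        Multiplicative (ZMod 2 × ZMod 2))) ∧
    ((ν = -1 ∧ Odd k) →
      Nonempty (Subgroup.center (Egrp (2 * k - 1) ν) ≃* Multiplicative (ZMod 4))) := by
  have hm : Odd (2 * k - 1) := ⟨k - 1, by omega⟩
  have hform : eForm (2 * k - 1) ν (EModel.alternating _) (EModel.alternating _) = nuExp ν * k := by
    rw [EModel.eForm_alternating, show (2 * k - 1 + 1) / 2 = k by omega]
  let e := Subgroup.centerCongr (Egrp.equivModel (2 * k - 1) ν)
  constructor
  · intro h
    have hc : nuExp ν * k = 0 := by
      rcases h with rfl | heven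
      · simp [nuExp]
      · rw [ZMod.natCast_eq_zero_iff_even.mpr heven, mul_zero]
    have := EModel.isKleinFour_center hm (hform.trans hc)
    exact ⟨e.trans IsKleinFour.nonempty_mulEquiv.some⟩
  · rintro ⟨rfl, hodd⟩
    have hc : nuExp (-1) * k = 1 := by
      rw [ZMod.natCast_eq_one_iff_odd.mpr hodd, mul_one]; rfl
    have := EModel.isCyclic_center hm (hform.trans hc)
    exact ⟨e.trans (mulEquivOfCyclicCardEq (by simp [EModel.card_center hm]))⟩
end
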